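/- arXiv:2602.00688 — 8 statements merged into one kernel-verified Lean document; each statement's English description precedes it below -/
import Mathlib

section
/- Let p, q be strictly positive probability distributions on a finite set Y with |Y| = n. Define relative probability distributions rp(y) := p(y)/tp and rq(y) := q(y)/tq, where tp, tq are the geometric means of p and q respectively. Let r be the CP-Δr aggregation r(y) := min(rp(y), rq(y))/Z with Z := ∑_y min(rp(y), rq(y)), and let rr := RPD(r) be its relative probability distribution. Then max_y log(rr(y)/rp(y)) = max_y log(rr(y)/rq(y)) = (1/(2n)) ∑_y |log(rp(y)/rq(y))|. -/
theorem stmt4 {Y : Type*} [Fintype Y] [Nonempty Y]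
    (p q : Y → ℝ) (hp : ∀ y, 0 < p y) (hq : ∀ y, 0 < q y)
    (hps : ∑ y, p y = 1) (hqs : ∑ y, q y = 1)
    (tp tq : ℝ)
    (htp : tp = Real.exp ((1 / (Fintype.card Y : ℝ)) * ∑ y, Real.log (p y)))
    (htq : tq = Real.exp ((1 / (Fintype.card Y : ℝ)) * ∑ y, Real.log (q y)))
    (rp rq : Y → ℝ) (hrp : ∀ y, rp y = p y / tp) (hrq : ∀ y, rq y = q y / tq)
    (Z : ℝ) (hZ : Z = ∑ y, min (rp y) (rq y))
    (r : Y → ℝ) (hr : ∀ y, r y = min (rp y) (rq y) / Z)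
    (tr : ℝ) (htr : tr = Real.exp ((1 / (Fintype.card Y : ℝ)) * ∑ y, Real.log (r y)))
    (rr : Y → ℝ) (hrr : ∀ y, rr y = r y / tr)
    (k : ℝ) (hk : k = (1 / (2 * (Fintype.card Y : ℝ))) * ∑ y, |Real.log (rp y / rq y)|) :
    IsGreatest (Set.range fun y => Real.log (rr y / rp y)) k ∧
    IsGreatest (Set.range fun y => Real.log (rr y / rq y)) k := by
  have hn : (0:ℝ) < (Fintype.card Y : ℝ) := by exact_mod_cast Fintype.card_pos
  have htp_pos : 0 < tp := htp ▸ Real.exp_pos _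
  have htq_pos : 0 < tq := htq ▸ Real.exp_pos _
  have hrp_pos : ∀ y, 0 < rp y := fun y => (hrp y) ▸ div_pos (hp y) htp_pos
  have hrq_pos : ∀ y, 0 < rq y := fun y => (hrq y) ▸ div_pos (hq y) htq_pos
  set a : Y → ℝ := fun y => Real.log (rp y) with ha_def
  set b : Y → ℝ := fun y => Real.log (rq y) with hb_def
  have ha_sum : ∑ y, a y = 0 := by
    have h1 : ∀ y, a y = Real.log (p y) - (1 / (Fintype.card Y : ℝ)) * ∑ z, Real.log (p z) := by
      intro y
      simp only [ha_def]
      rw [hrp y, Real.log_div (hp y).ne' htp_pos.ne', htp, Real.log_exp]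
    rw [Finset.sum_congr rfl (fun y _ => h1 y), Finset.sum_sub_distrib, Finset.sum_const,
      nsmul_eq_mul]
    field_simp
    simp
  have hb_sum : ∑ y, b y = 0 := by
    have h1 : ∀ y, b y = Real.log (q y) - (1 / (Fintype.card Y : ℝ)) * ∑ z, Real.log (q z) := by
      intro y
      simp only [hb_def]
      rw [hrq y, Real.log_div (hq y).ne' htq_pos.ne', htq, Real.log_exp]
    rw [Finset.sum_congr rfl (fun y _ => h1 y), Finset.sum_sub_distrib, Finset.sum_const,
      nsmul_eq_mul]
    field_simp
    simp
  have hZ_pos : 0 < Z := by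
    rw [hZ]
    exact Finset.sum_pos (fun y _ => lt_min (hrp_pos y) (hrq_pos y)) Finset.univ_nonempty
  have hr_pos : ∀ y, 0 < r y := fun y => (hr y) ▸ div_pos (lt_min (hrp_pos y) (hrq_pos y)) hZ_pos
  have htr_pos : 0 < tr := htr ▸ Real.exp_pos _
  have hrr_pos : ∀ y, 0 < rr y := fun y => (hrr y) ▸ div_pos (hr_pos y) htr_pos
  have hlogmin : ∀ y, Real.log (min (rp y) (rq y)) = min (a y) (b y) := by
    intro y
    rcases le_total (rp y) (rq y) with h | h
    · rw [min_eq_left h, min_eq_left]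
      exact Real.log_le_log (hrp_pos y) h
    · rw [min_eq_right h, min_eq_right]
      exact Real.log_le_log (hrq_pos y) h
  have hminform : ∀ y, min (a y) (b y) = (a y + b y - |a y - b y|) / 2 := by
    intro y
    rcases le_total (a y) (b y) with h | h
    · rw [min_eq_left h, abs_of_nonpos (by linarith)]; ring
    · rw [min_eq_right h, abs_of_nonneg (by linarith)]; ring
  have hsum_min : ∑ y, min (a y) (b y) = -(1/2) * ∑ y, |a y - b y| := by
    rw [Finset.sum_congr rfl (fun y _ => hminform y)]
    rw [← Finset.sum_div, Finset.sum_sub_distrib, Finset.sum_add_distrib, ha_sum, hb_sum]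
    ring
  have hk' : k = (1 / (2 * (Fintype.card Y : ℝ))) * ∑ y, |a y - b y| := by
    rw [hk]
    congr 1
    refine Finset.sum_congr rfl fun y _ => ?_
    rw [Real.log_div (hrp_pos y).ne' (hrq_pos y).ne']
  have hlogrr : ∀ y, Real.log (rr y) = min (a y) (b y) + k := by
    intro y
    have hlogr : ∀ z, Real.log (r z) = min (a z) (b z) - Real.log Z := by
      intro z
      rw [hr z, Real.log_div (lt_min (hrp_pos z) (hrq_pos z)).ne' hZ_pos.ne', hlogmin z]
    have hsumr : ∑ z, Real.log (r z) = (-(1/2) * ∑ z, |a z - b z|) - (Fintype.card Y : ℝ) * Real.log Z := by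
      rw [Finset.sum_congr rfl (fun z _ => hlogr z), Finset.sum_sub_distrib, hsum_min,
        Finset.sum_const, nsmul_eq_mul, Finset.card_univ]
    rw [hrr y, Real.log_div (hr_pos y).ne' htr_pos.ne', hlogr y, htr, Real.log_exp, hsumr, hk']
    field_simp
    ring
  have key : ∀ c : Y → ℝ, (∀ y, Real.log (c y) = b y ∨ Real.log (c y) = a y) →
      True := fun _ _ => trivial
  have hub1 : ∀ y, Real.log (rr y / rp y) = min (a y) (b y) - a y + k := by
    intro y
    rw [Real.log_div (hrr_pos y).ne' (hrp_pos y).ne', hlogrr y]; ring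
  have hub2 : ∀ y, Real.log (rr y / rq y) = min (a y) (b y) - b y + k := by
    intro y
    rw [Real.log_div (hrr_pos y).ne' (hrq_pos y).ne', hlogrr y]; ring
  have hex1 : ∃ y, a y ≤ b y := by
    by_contra h
    push_neg at h
    have : (0:ℝ) < ∑ y, (a y - b y) :=
      Finset.sum_pos (fun y _ => sub_pos.mpr (h y)) Finset.univ_nonempty
    rw [Finset.sum_sub_distrib, ha_sum, hb_sum] at this
    linarith
  have hex2 : ∃ y, b y ≤ a y := by
    by_contra h
    push_neg at h
    have : (0:ℝ) < ∑ y, (b y - a y) :=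
      Finset.sum_pos (fun y _ => sub_pos.mpr (h y)) Finset.univ_nonempty
    rw [Finset.sum_sub_distrib, ha_sum, hb_sum] at this
    linarith
  constructor
  · constructor
    · obtain ⟨y, hy⟩ := hex1
      exact ⟨y, by show Real.log (rr y / rp y) = k; rw [hub1 y, min_eq_left hy]; ring⟩
    · rintro z ⟨y, rfl⟩
      show Real.log (rr y / rp y) ≤ k
      rw [hub1 y]
      have : min (a y) (b y) ≤ a y := min_le_left _ _
      linarith
  · constructor
    · obtain ⟨y, hy⟩ := hex2
      exact ⟨y, by show Real.log (rr y / rq y) = k; rw [hub2 y, min_eq_right hy]; ring⟩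
    · rintro z ⟨y, rfl⟩
      show Real.log (rr y / rq y) ≤ k
      rw [hub2 y]
      have : min (a y) (b y) ≤ b y := min_le_right _ _
      linarith
end

section
/- Let p, q be strictly positive probability distributions on a finite set Y with |Y| = n. Suppose there is a set A ⊆ Y with |A| = m and a constant α > 0 such that p(y) = α · q(y) for all y ∉ A, and suppose |log(p(y)/q(y))| ≤ log M for all y ∈ A (with M ≥ 1). Then D_r(p,q) := (1/(2n)) ∑_{y∈Y} |log(rp(y)/rq(y))| ≤ (m/n)(log M + |log α|), where rp, rq are the relative probability distributions of p and q. -/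
theorem stmt6 {Y : Type*} [Fintype Y] [Nonempty Y]
    (p q : Y → ℝ) (hp : ∀ y, 0 < p y) (hq : ∀ y, 0 < q y)
    (hps : ∑ y, p y = 1) (hqs : ∑ y, q y = 1)
    (tp tq : ℝ)
    (htp : tp = Real.exp ((1 / (Fintype.card Y : ℝ)) * ∑ y, Real.log (p y)))
    (htq : tq = Real.exp ((1 / (Fintype.card Y : ℝ)) * ∑ y, Real.log (q y)))
    (rp rq : Y → ℝ) (hrp : ∀ y, rp y = p y / tp) (hrq : ∀ y, rq y = q y / tq)
    (A : Finset Y) (m : ℕ) (hA : A.card = m)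
    (α : ℝ) (hα : 0 < α) (hout : ∀ y ∉ A, p y = α * q y)
    (M : ℝ) (hM : 1 ≤ M)
    (hin : ∀ y ∈ A, |Real.log (p y / q y)| ≤ Real.log M) :
    (1 / (2 * (Fintype.card Y : ℝ))) * ∑ y, |Real.log (rp y / rq y)| ≤
      ((m : ℝ) / (Fintype.card Y : ℝ)) * (Real.log M + |Real.log α|) := by
  classical
  set n := Fintype.card Y with hn
  have hn0 : 0 < (n : ℝ) := by exact_mod_cast Fintype.card_pos
  set L := Real.log M with hLdef
  have hL0 : 0 ≤ L := Real.log_nonneg hM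
  set a := |Real.log α| with hadef
  have ha0 : 0 ≤ a := abs_nonneg _
  set f : Y → ℝ := fun y => Real.log (p y) - Real.log (q y) with hfdef
  set c : ℝ := (1 / (n : ℝ)) * ∑ y, f y with hcdef
  have htp0 : 0 < tp := by rw [htp]; exact Real.exp_pos _
  have htq0 : 0 < tq := by rw [htq]; exact Real.exp_pos _
  have hfq : ∀ y, Real.log (p y / q y) = f y := fun y =>
    Real.log_div (hp y).ne' (hq y).ne'
  -- c = log tp - log tq
  have hcval : c = Real.log tp - Real.log tq := by
    rw [hcdef, htp, htq, Real.log_exp, Real.log_exp, ← mul_sub,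
      ← Finset.sum_sub_distrib]
  have hlog : ∀ y, Real.log (rp y / rq y) = f y - c := by
    intro y
    rw [hrp, hrq, Real.log_div (div_pos (hp y) htp0).ne' (div_pos (hq y) htq0).ne',
      Real.log_div (hp y).ne' htp0.ne', Real.log_div (hq y).ne' htq0.ne',
      hcval]
    ring
  have hmn : m ≤ n := by
    rw [← hA, hn]; exact Finset.card_le_univ A
  have hmn' : (m : ℝ) ≤ (n : ℝ) := by exact_mod_cast hmn
  have hfA : ∀ y ∈ A, |f y| ≤ L := by
    intro y hy
    rw [← hfq y]; exact hin y hy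
  have hsumA : |∑ y ∈ A, f y| ≤ (m : ℝ) * L := by
    calc |∑ y ∈ A, f y| ≤ ∑ y ∈ A, |f y| := Finset.abs_sum_le_sum_abs _ _
      _ ≤ A.card • L := Finset.sum_le_card_nsmul _ _ _ hfA
      _ = (m : ℝ) * L := by rw [hA, nsmul_eq_mul]
  have hout' : ∀ y ∉ A, f y = Real.log α := by
    intro y hy
    rw [hfdef]
    simp only
    rw [hout y hy, Real.log_mul hα.ne' (hq y).ne']
    ring
  have hcardc : ((Aᶜ.card : ℝ)) = (n : ℝ) - m := by
    rw [Finset.card_compl, hA, ← hn, Nat.cast_sub hmn]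
  have hsum : ∑ y, f y = (∑ y ∈ A, f y) + ((n : ℝ) - m) * Real.log α := by
    rw [← Finset.sum_add_sum_compl A f]
    congr 1
    rw [Finset.sum_congr rfl (fun y hy => hout' y (Finset.mem_compl.mp hy)),
      Finset.sum_const, nsmul_eq_mul, hcardc]
  have hnm0 : 0 ≤ (n : ℝ) - m := by linarith
  have hcb : (n : ℝ) * |c| ≤ (m : ℝ) * L + ((n : ℝ) - m) * a := by
    have h1 : (n : ℝ) * c = ∑ y, f y := by
      rw [hcdef]; field_simp
    have h2 : |(n : ℝ) * c| = (n : ℝ) * |c| := by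
      rw [abs_mul, abs_of_pos hn0]
    calc (n : ℝ) * |c| = |∑ y, f y| := by rw [← h2, h1]
      _ = |(∑ y ∈ A, f y) + ((n : ℝ) - m) * Real.log α| := by rw [hsum]
      _ ≤ |∑ y ∈ A, f y| + |((n : ℝ) - m) * Real.log α| := abs_add_le _ _
      _ ≤ (m : ℝ) * L + ((n : ℝ) - m) * a := by
          rw [abs_mul, abs_of_nonneg hnm0]
          exact add_le_add hsumA le_rfl
  -- bound on complement terms
  have hcompl : ∀ y ∉ A, |f y - c| ≤ ((m : ℝ) / n) * (L + a) := by
    intro y hy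
    have h1 : f y - c = (1 / (n : ℝ)) * ((m : ℝ) * Real.log α - ∑ x ∈ A, f x) := by
      rw [hout' y hy, hcdef, hsum]
      field_simp
      ring
    rw [h1, abs_mul, abs_of_pos (by positivity : (0:ℝ) < 1 / (n:ℝ))]
    have h2 : |(m : ℝ) * Real.log α - ∑ x ∈ A, f x| ≤ (m : ℝ) * a + (m : ℝ) * L := by
      calc |(m : ℝ) * Real.log α - ∑ x ∈ A, f x|
          ≤ |(m : ℝ) * Real.log α| + |∑ x ∈ A, f x| := abs_sub _ _
        _ ≤ (m : ℝ) * a + (m : ℝ) * L := by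
            rw [abs_mul, abs_of_nonneg (by positivity : (0:ℝ) ≤ (m:ℝ))]
            exact add_le_add le_rfl hsumA
    calc (1 / (n : ℝ)) * |(m : ℝ) * Real.log α - ∑ x ∈ A, f x|
        ≤ (1 / (n : ℝ)) * ((m : ℝ) * a + (m : ℝ) * L) := by
          apply mul_le_mul_of_nonneg_left h2 (by positivity)
      _ = ((m : ℝ) / n) * (L + a) := by ring
  set S := ∑ y, |f y - c| with hSdef
  have hSrw : (∑ y, |Real.log (rp y / rq y)|) = S := by
    apply Finset.sum_congr rfl
    intro y _
    rw [hlog y]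
  have hS1 : S ≤ (m : ℝ) * (L + |c|) + ((n : ℝ) - m) * (((m : ℝ) / n) * (L + a)) := by
    rw [hSdef, ← Finset.sum_add_sum_compl A]
    apply add_le_add
    · calc ∑ y ∈ A, |f y - c| ≤ A.card • (L + |c|) := by
            apply Finset.sum_le_card_nsmul
            intro y hy
            calc |f y - c| ≤ |f y| + |c| := abs_sub _ _
              _ ≤ L + |c| := add_le_add (hfA y hy) le_rfl
        _ = (m : ℝ) * (L + |c|) := by rw [hA, nsmul_eq_mul]
    · calc ∑ y ∈ Aᶜ, |f y - c| ≤ Aᶜ.card • (((m : ℝ) / n) * (L + a)) := by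
            apply Finset.sum_le_card_nsmul
            intro y hy
            exact hcompl y (Finset.mem_compl.mp hy)
        _ = ((n : ℝ) - m) * (((m : ℝ) / n) * (L + a)) := by
            rw [nsmul_eq_mul, hcardc]
  have key : (n : ℝ) * S ≤ 2 * m * (L + a) * n := by
    have h1 : (n : ℝ) * S ≤ (n : ℝ) * ((m : ℝ) * (L + |c|) + ((n : ℝ) - m) * (((m : ℝ) / n) * (L + a))) :=
      mul_le_mul_of_nonneg_left hS1 hn0.le
    have h2 : (n : ℝ) * (((n : ℝ) - m) * (((m : ℝ) / n) * (L + a))) = ((n:ℝ) - m) * m * (L + a) := by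
      field_simp
    have hm0 : (0:ℝ) ≤ (m:ℝ) := by positivity
    rw [mul_add, h2] at h1
    nlinarith [mul_le_mul_of_nonneg_left hcb hm0, mul_nonneg (mul_nonneg hm0 hm0) ha0,
      abs_nonneg c]
  rw [hSrw]
  rw [show (1 / (2 * (n : ℝ))) * S = S / (2 * n) by ring,
    show ((m : ℝ) / n) * (L + a) = ((m : ℝ) * (L + a)) / n by ring,
    div_le_div_iff₀ (by positivity) hn0]
  linarith [key]
end

section
/- Let p, q be strictly positive probability distributions on a finite set Y with geometric means tp, tq and RPDs rp, rq. Let r₁ be the CP-Δr aggregation of p and q: r₁(y) = min(rp(y), rq(y))/Z with Z = ∑_y min(rp(y), rq(y)), and let tr₁ be the geometric mean of r₁. Let k := (1/(2n)) ∑_y |log(rp(y)/rq(y))|. Then for every y ∈ Y, r₁(y)/q(y) ≤ (tr₁/tq)·e^k. -/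
theorem stmt9 {Y : Type*} [Fintype Y] [Nonempty Y]
    (p q : Y → ℝ) (hp : ∀ y, 0 < p y) (hq : ∀ y, 0 < q y)
    (hps : ∑ y, p y = 1) (hqs : ∑ y, q y = 1)
    (tp tq : ℝ)
    (htp : tp = Real.exp ((1 / (Fintype.card Y : ℝ)) * ∑ y, Real.log (p y)))
    (htq : tq = Real.exp ((1 / (Fintype.card Y : ℝ)) * ∑ y, Real.log (q y)))
    (rp rq : Y → ℝ) (hrp : ∀ y, rp y = p y / tp) (hrq : ∀ y, rq y = q y / tq)
    (Z : ℝ) (hZ : Z = ∑ y, min (rp y) (rq y))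
    (r1 : Y → ℝ) (hr1 : ∀ y, r1 y = min (rp y) (rq y) / Z)
    (tr1 : ℝ)
    (htr1 : tr1 = Real.exp ((1 / (Fintype.card Y : ℝ)) * ∑ y, Real.log (r1 y)))
    (k : ℝ)
    (hk : k = (1 / (2 * (Fintype.card Y : ℝ))) * ∑ y, |Real.log (rp y / rq y)|) :
    ∀ y, r1 y / q y ≤ (tr1 / tq) * Real.exp k := by
  set n : ℝ := (Fintype.card Y : ℝ) with hn
  have hn0 : (0:ℝ) < n := by
    rw [hn]
    exact_mod_cast Fintype.card_pos (α := Y)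
  have hne : n ≠ 0 := ne_of_gt hn0
  have htp0 : 0 < tp := htp ▸ Real.exp_pos _
  have htq0 : 0 < tq := htq ▸ Real.exp_pos _
  have hrp0 : ∀ z, 0 < rp z := fun z => (hrp z) ▸ div_pos (hp z) htp0
  have hrq0 : ∀ z, 0 < rq z := fun z => (hrq z) ▸ div_pos (hq z) htq0
  have hmin0 : ∀ z, 0 < min (rp z) (rq z) := fun z => lt_min (hrp0 z) (hrq0 z)
  have hZ0 : 0 < Z := hZ ▸ Finset.sum_pos (fun z _ => hmin0 z) Finset.univ_nonempty
  have hr10 : ∀ z, 0 < r1 z := fun z => (hr1 z) ▸ div_pos (hmin0 z) hZ0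
  have hlogtp : Real.log tp = (1/n) * ∑ z, Real.log (p z) := by rw [htp, Real.log_exp]
  have hlogtq : Real.log tq = (1/n) * ∑ z, Real.log (q z) := by rw [htq, Real.log_exp]
  have ha : ∑ z, Real.log (rp z) = 0 := by
    have h1 : ∀ z : Y, Real.log (rp z) = Real.log (p z) - Real.log tp := fun z => by
      rw [hrp z, Real.log_div (hp z).ne' htp0.ne']
    rw [Finset.sum_congr rfl fun z _ => h1 z, Finset.sum_sub_distrib, Finset.sum_const,
      Finset.card_univ, nsmul_eq_mul, hlogtp, ← hn]
    field_simp
    ring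
  have hb : ∑ z, Real.log (rq z) = 0 := by
    have h1 : ∀ z : Y, Real.log (rq z) = Real.log (q z) - Real.log tq := fun z => by
      rw [hrq z, Real.log_div (hq z).ne' htq0.ne']
    rw [Finset.sum_congr rfl fun z _ => h1 z, Finset.sum_sub_distrib, Finset.sum_const,
      Finset.card_univ, nsmul_eq_mul, hlogtq, ← hn]
    field_simp
    ring
  have keymin : ∀ z : Y, Real.log (min (rp z) (rq z)) =
      (Real.log (rp z) + Real.log (rq z) - |Real.log (rp z) - Real.log (rq z)|) / 2 := by
    intro z
    rcases le_total (rp z) (rq z) with h | h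
    · have hl : Real.log (rp z) ≤ Real.log (rq z) := Real.log_le_log (hrp0 z) h
      rw [min_eq_left h, abs_of_nonpos (by linarith)]
      ring
    · have hl : Real.log (rq z) ≤ Real.log (rp z) := Real.log_le_log (hrq0 z) h
      rw [min_eq_right h, abs_of_nonneg (by linarith)]
      ring
  have hsummin : ∑ z, Real.log (min (rp z) (rq z)) =
      -(∑ z, |Real.log (rp z) - Real.log (rq z)|) / 2 := by
    rw [Finset.sum_congr rfl fun z _ => keymin z]
    rw [show (fun z => (Real.log (rp z) + Real.log (rq z) - |Real.log (rp z) - Real.log (rq z)|) / 2)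
      = fun z => (Real.log (rp z) + Real.log (rq z) - |Real.log (rp z) - Real.log (rq z)|) * (1/2) from by
        funext z; ring]
    rw [← Finset.sum_mul, Finset.sum_sub_distrib, Finset.sum_add_distrib, ha, hb]
    ring
  have hk' : k = (1 / (2*n)) * ∑ z, |Real.log (rp z) - Real.log (rq z)| := by
    rw [hk]
    congr 1
    exact Finset.sum_congr rfl fun z _ => by rw [Real.log_div (hrp0 z).ne' (hrq0 z).ne']
  have hlogr1 : ∀ z : Y, Real.log (r1 z) = Real.log (min (rp z) (rq z)) - Real.log Z :=
    fun z => by rw [hr1 z, Real.log_div (hmin0 z).ne' hZ0.ne']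
  have hsumr1 : ∑ z, Real.log (r1 z)
      = -(∑ z, |Real.log (rp z) - Real.log (rq z)|) / 2 - n * Real.log Z := by
    rw [Finset.sum_congr rfl fun z _ => hlogr1 z, Finset.sum_sub_distrib, Finset.sum_const,
      Finset.card_univ, nsmul_eq_mul, ← hn, hsummin]
  have hlogq : ∀ z : Y, Real.log (q z) = Real.log (rq z) + Real.log tq := by
    intro z
    have : Real.log (rq z) = Real.log (q z) - Real.log tq := by
      rw [hrq z, Real.log_div (hq z).ne' htq0.ne']
    linarith
  intro y
  have hLrw : r1 y / q y = Real.exp (Real.log (r1 y) - Real.log (q y)) := by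
    rw [Real.exp_sub, Real.exp_log (hr10 y), Real.exp_log (hq y)]
  have hRrw : tr1 / tq * Real.exp k =
      Real.exp ((1/n) * ∑ z, Real.log (r1 z) - (1/n) * ∑ z, Real.log (q z) + k) := by
    rw [htr1, htq, ← Real.exp_sub, ← Real.exp_add]
  rw [hLrw, hRrw, Real.exp_le_exp]
  set S := ∑ z, |Real.log (rp z) - Real.log (rq z)| with hS
  have hmy : Real.log (min (rp y) (rq y)) ≤ Real.log (rq y) :=
    Real.log_le_log (hmin0 y) (min_le_right _ _)
  have hrhs : (1/n) * (-S / 2 - n * Real.log Z) - Real.log tq + (1/(2*n)) * S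
      = - Real.log Z - Real.log tq := by
    field_simp
    ring
  rw [hlogr1 y, hlogq y, hsumr1, hk', ← hlogtq]
  linarith
end

section
/- Let q, p₀, p₁ be strictly positive probability distributions on a finite set Y with RPDs rq, rp₀, rp₁. For i ∈ {0,1}, let r_i(y) := min(rp_i(y), rq(y))/Z_i with Z_i := ∑_y min(rp_i(y), rq(y)), and let tr_i be the geometric mean of r_i. Let k := D_r(p₁, q) := (1/(2n)) ∑_y |log(rp₁(y)/rq(y))|. Then for every y ∈ Y, r₁(y)/r₀(y) ≤ max(1, rq(y)/rp₀(y)) · (tr₁/tr₀) · e^k. -/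
lemma log_min_eq {a b : ℝ} (ha : 0 < a) (hb : 0 < b) :
    Real.log (min a b) = (Real.log a + Real.log b - |Real.log a - Real.log b|) / 2 := by
  have h : Real.log (min a b) = min (Real.log a) (Real.log b) := by
    rcases le_total a b with h | h
    · rw [min_eq_left h, min_eq_left (Real.log_le_log ha h)]
    · rw [min_eq_right h, min_eq_right (Real.log_le_log hb h)]
  have h1 : min (Real.log a) (Real.log b) + max (Real.log a) (Real.log b)
      = Real.log a + Real.log b := min_add_max _ _
  have h2 : max (Real.log a) (Real.log b) - min (Real.log a) (Real.log b)
      = |Real.log a - Real.log b| := (max_sub_min_eq_abs _ _).trans (abs_sub_comm _ _)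
  rw [h]; linarith

theorem stmt10 {Y : Type*} [Fintype Y] [Nonempty Y]
    (q p0 p1 : Y → ℝ)
    (hq : ∀ y, 0 < q y) (hp0 : ∀ y, 0 < p0 y) (hp1 : ∀ y, 0 < p1 y)
    (hqs : ∑ y, q y = 1) (hp0s : ∑ y, p0 y = 1) (hp1s : ∑ y, p1 y = 1)
    (tq tp0 tp1 : ℝ)
    (htq : tq = Real.exp ((1 / (Fintype.card Y : ℝ)) * ∑ y, Real.log (q y)))
    (htp0 : tp0 = Real.exp ((1 / (Fintype.card Y : ℝ)) * ∑ y, Real.log (p0 y)))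
    (htp1 : tp1 = Real.exp ((1 / (Fintype.card Y : ℝ)) * ∑ y, Real.log (p1 y)))
    (rq rp0 rp1 : Y → ℝ)
    (hrq : ∀ y, rq y = q y / tq) (hrp0 : ∀ y, rp0 y = p0 y / tp0)
    (hrp1 : ∀ y, rp1 y = p1 y / tp1)
    (Z0 Z1 : ℝ)
    (hZ0 : Z0 = ∑ y, min (rp0 y) (rq y)) (hZ1 : Z1 = ∑ y, min (rp1 y) (rq y))
    (r0 r1 : Y → ℝ)
    (hr0 : ∀ y, r0 y = min (rp0 y) (rq y) / Z0)
    (hr1 : ∀ y, r1 y = min (rp1 y) (rq y) / Z1)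
    (tr0 tr1 : ℝ)
    (htr0 : tr0 = Real.exp ((1 / (Fintype.card Y : ℝ)) * ∑ y, Real.log (r0 y)))
    (htr1 : tr1 = Real.exp ((1 / (Fintype.card Y : ℝ)) * ∑ y, Real.log (r1 y)))
    (k : ℝ)
    (hk : k = (1 / (2 * (Fintype.card Y : ℝ))) * ∑ y, |Real.log (rp1 y / rq y)|) :
    ∀ y, r1 y / r0 y ≤ max 1 (rq y / rp0 y) * (tr1 / tr0) * Real.exp k := by
  have hnpos : (0:ℝ) < (Fintype.card Y : ℝ) := by exact_mod_cast Fintype.card_pos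
  set n : ℝ := (Fintype.card Y : ℝ) with hn
  have htqpos : 0 < tq := htq ▸ Real.exp_pos _
  have htp0pos : 0 < tp0 := htp0 ▸ Real.exp_pos _
  have htp1pos : 0 < tp1 := htp1 ▸ Real.exp_pos _
  have hrqpos : ∀ y, 0 < rq y := fun y => by rw [hrq]; exact div_pos (hq y) htqpos
  have hrp0pos : ∀ y, 0 < rp0 y := fun y => by rw [hrp0]; exact div_pos (hp0 y) htp0pos
  have hrp1pos : ∀ y, 0 < rp1 y := fun y => by rw [hrp1]; exact div_pos (hp1 y) htp1pos
  have hmin0pos : ∀ y, 0 < min (rp0 y) (rq y) := fun y => lt_min (hrp0pos y) (hrqpos y)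
  have hmin1pos : ∀ y, 0 < min (rp1 y) (rq y) := fun y => lt_min (hrp1pos y) (hrqpos y)
  have hZ0pos : 0 < Z0 := by
    rw [hZ0]; exact Finset.sum_pos (fun y _ => hmin0pos y) Finset.univ_nonempty
  have hZ1pos : 0 < Z1 := by
    rw [hZ1]; exact Finset.sum_pos (fun y _ => hmin1pos y) Finset.univ_nonempty
  have htr0pos : 0 < tr0 := htr0 ▸ Real.exp_pos _
  have htr1pos : 0 < tr1 := htr1 ▸ Real.exp_pos _
  -- geometric mean of relative densities is 1, i.e. sums of logs vanish
  have key : ∀ (f : Y → ℝ) (t : ℝ), (∀ y, 0 < f y) →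
      t = Real.exp ((1 / n) * ∑ y, Real.log (f y)) →
      ∑ y, Real.log (f y / t) = 0 := by
    intro f t hf ht
    have htpos : 0 < t := ht ▸ Real.exp_pos _
    have hlt : Real.log t = (1 / n) * ∑ y, Real.log (f y) := by rw [ht, Real.log_exp]
    have : ∀ y, Real.log (f y / t) = Real.log (f y) - Real.log t := fun y =>
      Real.log_div (hf y).ne' htpos.ne'
    rw [Finset.sum_congr rfl fun y _ => this y, Finset.sum_sub_distrib,
      Finset.sum_const, Finset.card_univ, nsmul_eq_mul, hlt]
    field_simp
    rw [← hn]; ring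
  have hsumrq : ∑ y, Real.log (rq y) = 0 := by
    rw [Finset.sum_congr rfl fun y _ => by rw [hrq y]]
    exact key q tq hq htq
  have hsumrp0 : ∑ y, Real.log (rp0 y) = 0 := by
    rw [Finset.sum_congr rfl fun y _ => by rw [hrp0 y]]
    exact key p0 tp0 hp0 htp0
  have hsumrp1 : ∑ y, Real.log (rp1 y) = 0 := by
    rw [Finset.sum_congr rfl fun y _ => by rw [hrp1 y]]
    exact key p1 tp1 hp1 htp1
  -- sum of logs of mins
  have habs : ∀ (f : Y → ℝ), (∀ y, 0 < f y) →
      ∑ y, |Real.log (f y / rq y)| = ∑ y, |Real.log (f y) - Real.log (rq y)| :=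
    fun f hf => Finset.sum_congr rfl fun y _ => by
      rw [Real.log_div (hf y).ne' (hrqpos y).ne']
  have hmins : ∀ (f : Y → ℝ), (∀ y, 0 < f y) → (∑ y, Real.log (f y) = 0) →
      ∑ y, Real.log (min (f y) (rq y))
        = -(1/2) * ∑ y, |Real.log (f y) - Real.log (rq y)| := by
    intro f hf hs
    have : ∀ y, Real.log (min (f y) (rq y))
        = (Real.log (f y) + Real.log (rq y) - |Real.log (f y) - Real.log (rq y)|) / 2 :=
      fun y => log_min_eq (hf y) (hrqpos y)
    rw [Finset.sum_congr rfl fun y _ => this y]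
    rw [show (fun y => (Real.log (f y) + Real.log (rq y)
        - |Real.log (f y) - Real.log (rq y)|) / 2)
      = (fun y => Real.log (f y) / 2 + Real.log (rq y) / 2
        - |Real.log (f y) - Real.log (rq y)| / 2) from funext fun y => by ring]
    rw [Finset.sum_sub_distrib, Finset.sum_add_distrib, ← Finset.sum_div, ← Finset.sum_div,
      ← Finset.sum_div, hs, hsumrq]
    ring
  -- tr_i in terms of Z_i
  have htr : ∀ (f : Y → ℝ) (Z : ℝ) (r : Y → ℝ) (tr : ℝ), (∀ y, 0 < f y) →
      (∑ y, Real.log (f y) = 0) → 0 < Z →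
      (∀ y, r y = min (f y) (rq y) / Z) →
      tr = Real.exp ((1 / n) * ∑ y, Real.log (r y)) →
      tr = Real.exp (-(1/(2*n)) * ∑ y, |Real.log (f y) - Real.log (rq y)|) / Z := by
    intro f Z r tr hf hs hZ hr htrdef
    have h1 : ∀ y, Real.log (r y) = Real.log (min (f y) (rq y)) - Real.log Z := fun y => by
      rw [hr y, Real.log_div (lt_min (hf y) (hrqpos y)).ne' hZ.ne']
    have h2 : ∑ y, Real.log (r y)
        = -(1/2) * (∑ y, |Real.log (f y) - Real.log (rq y)|) - n * Real.log Z := by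
      rw [Finset.sum_congr rfl fun y _ => h1 y, Finset.sum_sub_distrib,
        Finset.sum_const, Finset.card_univ, nsmul_eq_mul, hmins f hf hs]
    rw [htrdef, h2]
    rw [show (1 / n) * (-(1/2) * (∑ y, |Real.log (f y) - Real.log (rq y)|) - n * Real.log Z)
      = -(1/(2*n)) * (∑ y, |Real.log (f y) - Real.log (rq y)|) - Real.log Z from by
        field_simp]
    rw [Real.exp_sub, Real.exp_log hZ]
  have htr0' := htr rp0 Z0 r0 tr0 hrp0pos hsumrp0 hZ0pos hr0 htr0
  have htr1' := htr rp1 Z1 r1 tr1 hrp1pos hsumrp1 hZ1pos hr1 htr1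
  set k0 : ℝ := (1/(2*n)) * ∑ y, |Real.log (rp0 y) - Real.log (rq y)| with hk0
  have hk0nn : 0 ≤ k0 := by
    apply mul_nonneg (by positivity)
    exact Finset.sum_nonneg fun y _ => abs_nonneg _
  have hkeq : k = (1/(2*n)) * ∑ y, |Real.log (rp1 y) - Real.log (rq y)| := by
    rw [hk, habs rp1 hrp1pos]
  -- Z0 / Z1 ≤ (tr1/tr0) * exp k
  have hZratio : Z0 / Z1 ≤ (tr1 / tr0) * Real.exp k := by
    have : (tr1 / tr0) * Real.exp k = (Z0 / Z1) * Real.exp k0 := by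
      rw [htr0', htr1', hkeq, hk0]
      rw [neg_mul, Real.exp_neg, neg_mul, Real.exp_neg]
      have h1 := (Real.exp_pos ((1/(2*n)) * ∑ y, |Real.log (rp1 y) - Real.log (rq y)|)).ne'
      have h0 := (Real.exp_pos ((1/(2*n)) * ∑ y, |Real.log (rp0 y) - Real.log (rq y)|)).ne'
      field_simp
    rw [this]
    nth_rewrite 1 [← mul_one (Z0 / Z1)]
    apply mul_le_mul_of_nonneg_left (Real.one_le_exp hk0nn)
    positivity
  intro y
  have hmain : r1 y / r0 y = (min (rp1 y) (rq y) / min (rp0 y) (rq y)) * (Z0 / Z1) := by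
    rw [hr0, hr1]
    field_simp
  have hfrac : min (rp1 y) (rq y) / min (rp0 y) (rq y) ≤ max 1 (rq y / rp0 y) := by
    rcases min_cases (rp0 y) (rq y) with ⟨h, hle⟩ | ⟨h, hlt⟩
    · rw [h]
      refine le_trans ?_ (le_max_right _ _)
      exact div_le_div_of_nonneg_right (min_le_right _ _) (hrp0pos y).le
    · rw [h]
      refine le_trans ?_ (le_max_left _ _)
      rw [div_le_one (hrqpos y)]
      exact min_le_right _ _
  calc r1 y / r0 y = (min (rp1 y) (rq y) / min (rp0 y) (rq y)) * (Z0 / Z1) := hmain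
    _ ≤ max 1 (rq y / rp0 y) * ((tr1 / tr0) * Real.exp k) := by
        apply mul_le_mul hfrac hZratio (by positivity)
        exact le_trans zero_le_one (le_max_left _ _)
    _ = max 1 (rq y / rp0 y) * (tr1 / tr0) * Real.exp k := by ring
end

section
/- Let p, q be strictly positive probability distributions on a finite set Y with RPDs rp, rq, and let r(y) := min(rp(y), rq(y))/Z with Z := ∑_y min(rp(y), rq(y)). Then Z · tr = e^{−D_r(p,q)}, where tr is the geometric mean of r and D_r(p,q) := (1/(2n)) ∑_y |log(rp(y)/rq(y))|. -/
theorem stmt11 {Y : Type*} [Fintype Y] [Nonempty Y]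
    (p q : Y → ℝ) (hp : ∀ y, 0 < p y) (hq : ∀ y, 0 < q y)
    (hps : ∑ y, p y = 1) (hqs : ∑ y, q y = 1)
    (tp tq : ℝ)
    (htp : tp = Real.exp ((1 / (Fintype.card Y : ℝ)) * ∑ y, Real.log (p y)))
    (htq : tq = Real.exp ((1 / (Fintype.card Y : ℝ)) * ∑ y, Real.log (q y)))
    (rp rq : Y → ℝ) (hrp : ∀ y, rp y = p y / tp) (hrq : ∀ y, rq y = q y / tq)
    (Z : ℝ) (hZ : Z = ∑ y, min (rp y) (rq y))
    (r : Y → ℝ) (hr : ∀ y, r y = min (rp y) (rq y) / Z)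
    (tr : ℝ)
    (htr : tr = Real.exp ((1 / (Fintype.card Y : ℝ)) * ∑ y, Real.log (r y))) :
    Z * tr = Real.exp (-((1 / (2 * (Fintype.card Y : ℝ))) *
      ∑ y, |Real.log (rp y / rq y)|)) := by
  have hn0 : (0 : ℝ) < (Fintype.card Y : ℝ) := by
    exact_mod_cast Fintype.card_pos
  set n : ℝ := (Fintype.card Y : ℝ) with hn
  have hnne : n ≠ 0 := ne_of_gt hn0
  have htp0 : 0 < tp := htp ▸ Real.exp_pos _
  have htq0 : 0 < tq := htq ▸ Real.exp_pos _
  have hrp0 : ∀ y, 0 < rp y := fun y => (hrp y) ▸ div_pos (hp y) htp0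
  have hrq0 : ∀ y, 0 < rq y := fun y => (hrq y) ▸ div_pos (hq y) htq0
  have hm0 : ∀ y, 0 < min (rp y) (rq y) := fun y => lt_min (hrp0 y) (hrq0 y)
  have hZ0 : 0 < Z := hZ ▸ Finset.sum_pos (fun y _ => hm0 y) Finset.univ_nonempty
  -- sum of log rp is 0
  have hsum_rp : ∑ y, Real.log (rp y) = 0 := by
    have h1 : ∀ y, Real.log (rp y) = Real.log (p y) - Real.log tp := fun y => by
      rw [hrp, Real.log_div (ne_of_gt (hp y)) (ne_of_gt htp0)]
    have h2 : Real.log tp = (1 / n) * ∑ y, Real.log (p y) := by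
      rw [htp, Real.log_exp]
    simp only [h1, Finset.sum_sub_distrib, Finset.sum_const, Finset.card_univ, nsmul_eq_mul, h2]
    field_simp
    rw [← hn]; ring
  have hsum_rq : ∑ y, Real.log (rq y) = 0 := by
    have h1 : ∀ y, Real.log (rq y) = Real.log (q y) - Real.log tq := fun y => by
      rw [hrq, Real.log_div (ne_of_gt (hq y)) (ne_of_gt htq0)]
    have h2 : Real.log tq = (1 / n) * ∑ y, Real.log (q y) := by
      rw [htq, Real.log_exp]
    simp only [h1, Finset.sum_sub_distrib, Finset.sum_const, Finset.card_univ, nsmul_eq_mul, h2]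
    field_simp
    rw [← hn]; ring
  -- log of min
  have hkey : ∀ y, Real.log (min (rp y) (rq y)) =
      (Real.log (rp y) + Real.log (rq y)) / 2 - |Real.log (rp y / rq y)| / 2 := by
    intro y
    rw [Real.log_div (ne_of_gt (hrp0 y)) (ne_of_gt (hrq0 y))]
    rcases le_total (rp y) (rq y) with h | h
    · have hl : Real.log (rp y) ≤ Real.log (rq y) := Real.log_le_log (hrp0 y) h
      rw [min_eq_left h, abs_of_nonpos (by linarith)]
      ring
    · have hl : Real.log (rq y) ≤ Real.log (rp y) := Real.log_le_log (hrq0 y) h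
      rw [min_eq_right h, abs_of_nonneg (by linarith)]
      ring
  have hsum_min : ∑ y, Real.log (min (rp y) (rq y)) =
      -(1 / 2) * ∑ y, |Real.log (rp y / rq y)| := by
    rw [Finset.sum_congr rfl fun y _ => hkey y, Finset.sum_sub_distrib,
      ← Finset.sum_div, ← Finset.sum_div, Finset.sum_add_distrib, hsum_rp, hsum_rq]
    ring
  have hsum_r : ∑ y, Real.log (r y) =
      (∑ y, Real.log (min (rp y) (rq y))) - n * Real.log Z := by
    have h1 : ∀ y, Real.log (r y) = Real.log (min (rp y) (rq y)) - Real.log Z := fun y => by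
      rw [hr, Real.log_div (ne_of_gt (hm0 y)) (ne_of_gt hZ0)]
    simp only [h1, Finset.sum_sub_distrib, Finset.sum_const, Finset.card_univ, nsmul_eq_mul]
    rw [← hn]
  calc Z * tr = Real.exp (Real.log Z) * Real.exp ((1 / n) * ∑ y, Real.log (r y)) := by
        rw [Real.exp_log hZ0, htr]
    _ = Real.exp (Real.log Z + (1 / n) * ((∑ y, Real.log (min (rp y) (rq y))) - n * Real.log Z)) := by
        rw [← Real.exp_add, hsum_r]
    _ = Real.exp ((1 / n) * (-(1 / 2) * ∑ y, |Real.log (rp y / rq y)|)) := by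
        rw [hsum_min]; congr 1; field_simp; ring
    _ = Real.exp (-((1 / (2 * n)) * ∑ y, |Real.log (rp y / rq y)|)) := by
        congr 1; ring
end

section
/- Let p, q be strictly positive probability distributions on a finite set Y with geometric means tp, tq, and let r(y) := min(p(y)/tp, q(y)/tq)/z where z := ∑_y min(p(y)/tp, q(y)/tq). Then TV(r, q) ≤ TV(p, q) and TV(r, p) ≤ TV(p, q), where TV(u,v) := (1/2)∑_y |u(y) − v(y)|. -/
theorem stmt14 {Y : Type*} [Fintype Y] [Nonempty Y]
    (p q : Y → ℝ) (hp : ∀ y, 0 < p y) (hq : ∀ y, 0 < q y)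
    (hps : ∑ y, p y = 1) (hqs : ∑ y, q y = 1)
    (tp tq : ℝ)
    (htp : tp = Real.exp ((1 / (Fintype.card Y : ℝ)) * ∑ y, Real.log (p y)))
    (htq : tq = Real.exp ((1 / (Fintype.card Y : ℝ)) * ∑ y, Real.log (q y)))
    (z : ℝ) (hz : z = ∑ y, min (p y / tp) (q y / tq))
    (r : Y → ℝ) (hr : ∀ y, r y = min (p y / tp) (q y / tq) / z) :
    (1 / 2) * ∑ y, |r y - q y| ≤ (1 / 2) * ∑ y, |p y - q y| ∧
    (1 / 2) * ∑ y, |r y - p y| ≤ (1 / 2) * ∑ y, |p y - q y| := by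
  have htp0 : 0 < tp := htp ▸ Real.exp_pos _
  have htq0 : 0 < tq := htq ▸ Real.exp_pos _
  have hmpos : ∀ y, 0 < min (p y / tp) (q y / tq) := fun y =>
    lt_min (div_pos (hp y) htp0) (div_pos (hq y) htq0)
  have hz0 : 0 < z := hz ▸ Finset.sum_pos (fun y _ => hmpos y) Finset.univ_nonempty
  have hztp : z * tp ≤ 1 := by
    rw [hz, Finset.sum_mul]
    calc ∑ y, min (p y / tp) (q y / tq) * tp ≤ ∑ y, p y := by
          apply Finset.sum_le_sum; intro y _
          calc min (p y / tp) (q y / tq) * tp ≤ (p y / tp) * tp :=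
                mul_le_mul_of_nonneg_right (min_le_left _ _) htp0.le
            _ = p y := div_mul_cancel₀ _ htp0.ne'
      _ = 1 := hps
  have hztq : z * tq ≤ 1 := by
    rw [hz, Finset.sum_mul]
    calc ∑ y, min (p y / tp) (q y / tq) * tq ≤ ∑ y, q y := by
          apply Finset.sum_le_sum; intro y _
          calc min (p y / tp) (q y / tq) * tq ≤ (q y / tq) * tq :=
                mul_le_mul_of_nonneg_right (min_le_right _ _) htq0.le
            _ = q y := div_mul_cancel₀ _ htq0.ne'
      _ = 1 := hqs
  have hrm : ∀ y, min (p y) (q y) ≤ r y := by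
    intro y
    rw [hr]
    rcases le_total tp tq with h | h
    · -- r y ≥ min * tq ≥ min p q
      have h1 : tq ≤ z⁻¹ := by rw [inv_eq_one_div]; exact (le_div_iff₀ hz0).mpr (by linarith)
      have h2 : min (p y / tp) (q y / tq) * tq ≤ min (p y / tp) (q y / tq) / z := by
        rw [div_eq_mul_inv]
        exact mul_le_mul_of_nonneg_left h1 (hmpos y).le
      refine le_trans ?_ h2
      have hap : p y ≤ p y / tp * tq := by
        rw [div_mul_eq_mul_div, le_div_iff₀ htp0]
        exact mul_le_mul_of_nonneg_left h (hp y).le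
      have haq : q y = q y / tq * tq := (div_mul_cancel₀ _ htq0.ne').symm
      calc min (p y) (q y) ≤ min (p y / tp * tq) (q y / tq * tq) :=
            min_le_min hap haq.le
        _ = min (p y / tp) (q y / tq) * tq := (min_mul_of_nonneg _ _ htq0.le).symm
    · have h1 : tp ≤ z⁻¹ := by rw [inv_eq_one_div]; exact (le_div_iff₀ hz0).mpr (by linarith)
      have h2 : min (p y / tp) (q y / tq) * tp ≤ min (p y / tp) (q y / tq) / z := by
        rw [div_eq_mul_inv]
        exact mul_le_mul_of_nonneg_left h1 (hmpos y).le
      refine le_trans ?_ h2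
      have haq : q y ≤ q y / tq * tp := by
        rw [div_mul_eq_mul_div, le_div_iff₀ htq0]
        exact mul_le_mul_of_nonneg_left h (hq y).le
      have hap : p y = p y / tp * tp := (div_mul_cancel₀ _ htp0.ne').symm
      calc min (p y) (q y) ≤ min (p y / tp * tp) (q y / tq * tp) :=
            min_le_min hap.le haq
        _ = min (p y / tp) (q y / tq) * tp := (min_mul_of_nonneg _ _ htp0.le).symm
  have hrsum : ∑ y, r y = 1 := by
    simp only [hr]
    rw [← Finset.sum_div, ← hz, div_self hz0.ne']
  have habs : ∀ a b : ℝ, |a - b| = a + b - 2 * min a b := by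
    intro a b; rcases le_total a b with h | h
    · rw [abs_of_nonpos (by linarith), min_eq_left h]; ring
    · rw [abs_of_nonneg (by linarith), min_eq_right h]; ring
  have sum_abs : ∀ (u v : Y → ℝ), (∑ y, u y = 1) → (∑ y, v y = 1) →
      ∑ y, |u y - v y| = 2 - 2 * ∑ y, min (u y) (v y) := by
    intro u v hu hv
    have h1 : ∑ y, |u y - v y| = ∑ y, (u y + v y - 2 * min (u y) (v y)) :=
      Finset.sum_congr rfl fun y _ => habs _ _
    rw [h1, Finset.sum_sub_distrib, Finset.sum_add_distrib, hu, hv, ← Finset.mul_sum]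
    ring
  constructor
  · rw [sum_abs r q hrsum hqs, sum_abs p q hps hqs]
    have h : ∑ y, min (p y) (q y) ≤ ∑ y, min (r y) (q y) :=
      Finset.sum_le_sum fun y _ => le_min (hrm y) (min_le_right _ _)
    linarith
  · rw [sum_abs r p hrsum hps, sum_abs p q hps hqs]
    have h : ∑ y, min (p y) (q y) ≤ ∑ y, min (r y) (p y) :=
      Finset.sum_le_sum fun y _ => le_min (hrm y) (min_le_left _ _)
    linarith
end

section
/- Let p be a strictly positive probability distribution and b a strictly positive function on a finite set Y, with geometric means tp, tb and RPDs rp = p/tp, rb = b/tb. Let A ⊆ Y with |A| = m and let ε := (tp/tb)·∑_{y∉A} b(y). Define the smoothed RPD r̃p(y) = β·rp(y) for y ∈ A and β·rb(y) for y ∉ A with β > 0 chosen so ∑_y log r̃p(y) = 0, and let p̃ be the probability distribution proportional to r̃p. Then KL(p ∥ p̃) ≤ log(1 + ε) + ∑_{y∉A} p(y)·log(rp(y)/rb(y)). -/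
theorem stmt16 {Y : Type*} [Fintype Y] [Nonempty Y] [DecidableEq Y]
    (p b : Y → ℝ) (hp : ∀ y, 0 < p y) (hb : ∀ y, 0 < b y)
    (hps : ∑ y, p y = 1)
    (tp tb : ℝ)
    (htp : tp = Real.exp ((1 / (Fintype.card Y : ℝ)) * ∑ y, Real.log (p y)))
    (htb : tb = Real.exp ((1 / (Fintype.card Y : ℝ)) * ∑ y, Real.log (b y)))
    (rp rb : Y → ℝ) (hrp : ∀ y, rp y = p y / tp) (hrb : ∀ y, rb y = b y / tb)
    (A : Finset Y) (m : ℕ) (hA : A.card = m)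
    (ε : ℝ) (hε : ε = (tp / tb) * ∑ y ∈ Aᶜ, b y)
    (β : ℝ) (hβ : 0 < β)
    (rptil : Y → ℝ)
    (hrptil : ∀ y, rptil y = if y ∈ A then β * rp y else β * rb y)
    (hrptil0 : ∑ y, Real.log (rptil y) = 0)
    (ptil : Y → ℝ) (hptil : ∀ y, ptil y = rptil y / ∑ y', rptil y') :
    ∑ y, p y * Real.log (p y / ptil y) ≤
      Real.log (1 + ε) + ∑ y ∈ Aᶜ, p y * Real.log (rp y / rb y) := by
  have htp0 : 0 < tp := htp ▸ Real.exp_pos _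
  have htb0 : 0 < tb := htb ▸ Real.exp_pos _
  have hrp0 : ∀ y, 0 < rp y := fun y => (hrp y) ▸ div_pos (hp y) htp0
  have hrb0 : ∀ y, 0 < rb y := fun y => (hrb y) ▸ div_pos (hb y) htb0
  have hrt0 : ∀ y, 0 < rptil y := by
    intro y; rw [hrptil]; split
    · exact mul_pos hβ (hrp0 y)
    · exact mul_pos hβ (hrb0 y)
  set S := ∑ y', rptil y' with hSdef
  have hS0 : 0 < S := Finset.sum_pos (fun y _ => hrt0 y) Finset.univ_nonempty
  -- value of tp * S / β
  have hSval : tp * S / β = (∑ y ∈ A, p y) + ε := by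
    have hSsplit : S = β * ((∑ y ∈ A, rp y) + ∑ y ∈ Aᶜ, rb y) := by
      rw [hSdef, ← Finset.sum_add_sum_compl A rptil, mul_add, Finset.mul_sum, Finset.mul_sum]
      congr 1
      · exact Finset.sum_congr rfl fun y hy => by rw [hrptil, if_pos hy]
      · exact Finset.sum_congr rfl fun y hy => by
          rw [hrptil, if_neg (Finset.mem_compl.mp hy)]
    have h2 : ∑ y ∈ A, rp y = (∑ y ∈ A, p y) / tp := by
      rw [Finset.sum_div]; exact Finset.sum_congr rfl fun y _ => hrp y
    have h3 : ∑ y ∈ Aᶜ, rb y = (∑ y ∈ Aᶜ, b y) / tb := by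
      rw [Finset.sum_div]; exact Finset.sum_congr rfl fun y _ => hrb y
    rw [hSsplit, h2, h3, hε]
    field_simp
  have hsum_le : (∑ y ∈ A, p y) ≤ 1 := by
    rw [← hps]
    exact Finset.sum_le_sum_of_subset_of_nonneg (Finset.subset_univ A)
      (fun y _ _ => (hp y).le)
  have hε0 : 0 ≤ ε := by
    rw [hε]
    exact mul_nonneg (div_pos htp0 htb0).le
      (Finset.sum_nonneg fun y _ => (hb y).le)
  -- KL identity
  have hKL : ∑ y, p y * Real.log (p y / ptil y)
      = Real.log (tp * S / β) + ∑ y ∈ Aᶜ, p y * Real.log (rp y / rb y) := by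
    have h1 : ∀ y, p y * Real.log (p y / ptil y)
        = p y * (Real.log (p y) - Real.log (rptil y)) + p y * Real.log S := by
      intro y
      rw [hptil y, div_div_eq_mul_div, Real.log_div (mul_pos (hp y) hS0).ne' (hrt0 y).ne',
        Real.log_mul (hp y).ne' hS0.ne']
      ring
    rw [Finset.sum_congr rfl fun y _ => h1 y, Finset.sum_add_distrib, ← Finset.sum_mul, hps,
      one_mul]
    have hsplit : ∑ y, p y * (Real.log (p y) - Real.log (rptil y))
        = (∑ y ∈ A, p y) * (Real.log tp - Real.log β)
          + ((∑ y ∈ Aᶜ, p y) * (Real.log tp - Real.log β)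
              + ∑ y ∈ Aᶜ, p y * Real.log (rp y / rb y)) := by
      rw [← Finset.sum_add_sum_compl A fun y => p y * (Real.log (p y) - Real.log (rptil y))]
      congr 1
      · rw [Finset.sum_mul]
        refine Finset.sum_congr rfl fun y hy => ?_
        rw [hrptil, if_pos hy, hrp,
          Real.log_mul hβ.ne' (by rw [← hrp]; exact (hrp0 y).ne'),
          Real.log_div (hp y).ne' htp0.ne']
        ring
      · rw [Finset.sum_mul, ← Finset.sum_add_distrib]
        refine Finset.sum_congr rfl fun y hy => ?_
        rw [hrptil, if_neg (Finset.mem_compl.mp hy),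
          Real.log_mul hβ.ne' (hrb0 y).ne',
          Real.log_div (hrp0 y).ne' (hrb0 y).ne', hrp,
          Real.log_div (hp y).ne' htp0.ne']
        ring
    rw [hsplit, Real.log_div (mul_pos htp0 hS0).ne' hβ.ne',
      Real.log_mul htp0.ne' hS0.ne']
    have hps' : (∑ y ∈ A, p y) + ∑ y ∈ Aᶜ, p y = 1 := by
      rw [Finset.sum_add_sum_compl]; exact hps
    linear_combination (Real.log tp - Real.log β) * hps'
  rw [hKL]
  have hpos : 0 < tp * S / β := by positivity
  have hlog : Real.log (tp * S / β) ≤ Real.log (1 + ε) := by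
    apply Real.log_le_log hpos
    rw [hSval]; linarith
  linarith
end

section
/- In the setting of the smoothing KL bound (p strictly positive distribution, b strictly positive, A ⊆ Y, ε := (tp/tb)∑_{y∉A} b(y), p̃ the probability distribution induced by the smoothed RPD), for every y ∈ A one has p̃(y) ≥ p(y)/(1+ε), and for every y ∉ A one has p(y)/p̃(y) ≤ (1+ε)·rp(y)/rb(y). -/
theorem stmt17 {Y : Type*} [Fintype Y] [Nonempty Y] [DecidableEq Y]
    (p b : Y → ℝ) (hp : ∀ y, 0 < p y) (hb : ∀ y, 0 < b y)
    (hps : ∑ y, p y = 1)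
    (tp tb : ℝ)
    (htp : tp = Real.exp ((1 / (Fintype.card Y : ℝ)) * ∑ y, Real.log (p y)))
    (htb : tb = Real.exp ((1 / (Fintype.card Y : ℝ)) * ∑ y, Real.log (b y)))
    (rp rb : Y → ℝ) (hrp : ∀ y, rp y = p y / tp) (hrb : ∀ y, rb y = b y / tb)
    (A : Finset Y)
    (ε : ℝ) (hε : ε = (tp / tb) * ∑ y ∈ Aᶜ, b y)
    (β : ℝ) (hβ : 0 < β)
    (rptil : Y → ℝ)
    (hrptil : ∀ y, rptil y = if y ∈ A then β * rp y else β * rb y)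
    (hrptil0 : ∑ y, Real.log (rptil y) = 0)
    (ptil : Y → ℝ) (hptil : ∀ y, ptil y = rptil y / ∑ y', rptil y') :
    (∀ y ∈ A, p y / (1 + ε) ≤ ptil y) ∧
    (∀ y ∉ A, p y / ptil y ≤ (1 + ε) * (rp y / rb y)) := by
  have htp0 : 0 < tp := htp ▸ Real.exp_pos _
  have htb0 : 0 < tb := htb ▸ Real.exp_pos _
  have hε0 : 0 ≤ ε := by
    rw [hε]
    exact mul_nonneg (by positivity) (Finset.sum_nonneg fun y _ => (hb y).le)
  set S := ∑ y', rptil y' with hS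
  have hrpos : ∀ y, 0 < rptil y := by
    intro y
    rw [hrptil]
    split_ifs
    · rw [hrp]; exact mul_pos hβ (div_pos (hp y) htp0)
    · rw [hrb]; exact mul_pos hβ (div_pos (hb y) htb0)
  have hS0 : 0 < S := Finset.sum_pos (fun y _ => hrpos y) Finset.univ_nonempty
  have hsplit : tp * S = β * ((∑ y ∈ A, p y) + ε) := by
    rw [hS, ← Finset.sum_add_sum_compl A rptil, hε]
    have h1 : ∑ y ∈ A, rptil y = ∑ y ∈ A, β * (p y / tp) :=
      Finset.sum_congr rfl fun y hy => by rw [hrptil, if_pos hy, hrp]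
    have h2 : ∑ y ∈ Aᶜ, rptil y = ∑ y ∈ Aᶜ, β * (b y / tb) :=
      Finset.sum_congr rfl fun y hy => by
        rw [hrptil, if_neg (Finset.mem_compl.mp hy), hrb]
    rw [h1, h2, ← Finset.mul_sum, ← Finset.mul_sum, ← Finset.sum_div, ← Finset.sum_div]
    field_simp
  have hsA : ∑ y ∈ A, p y ≤ 1 := by
    rw [← hps, ← Finset.sum_add_sum_compl A p]
    have := Finset.sum_nonneg (s := Aᶜ) fun y _ => (hp y).le
    linarith
  have key : tp * S ≤ β * (1 + ε) := by
    rw [hsplit]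
    nlinarith
  constructor
  · intro y hy
    rw [hptil, hrptil, if_pos hy, hrp]
    rw [div_le_div_iff₀ (by positivity) hS0]
    have h2 : β * (p y / tp) * (1 + ε) = p y * (β * (1 + ε)) / tp := by
      field_simp
    rw [h2, le_div_iff₀ htp0]
    nlinarith [hp y, key]
  · intro y hy
    rw [hptil, hrptil, if_neg hy, hrp, hrb]
    have hX : 0 < β * (b y / tb) / S := by
      have := hb y; positivity
    rw [div_le_iff₀ hX]
    have heq : (1 + ε) * ((p y / tp) / (b y / tb)) * (β * (b y / tb) / S) =
        p y * (β * (1 + ε)) / (tp * S) := by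
      have := (hb y).ne'
      field_simp
    rw [heq, le_div_iff₀ (by positivity)]
    nlinarith [hp y, key]
end
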